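/- Let Y_1, ..., Y_B be i.i.d. uniform on a set of size A ≥ 2, and let Y^{b-1} = {Y_1,...,Y_{b-1}} be the distinct values seen before step b. Then ∑_{b=1}^B [ (L-1)·P(Y_b ∉ Y^{b-1}) + A^{-1} E(|Y^{b-1}| log₂ |Y^{b-1}|) ] ≥ 0.5 (L-1) min(A,B) + 0.5 (B-A)^+ log₂(A/2), for any real L ≥ 1. -/

import Mathlib

/-!
Steps are indexed from `0`, so `Y b` is preceded by the `b` draws `Y i`, `i < b`.
A union bound over the collisions `Y b = Y i` gives `P(Y b ∉ Y^{b-1}) ≥ 1 - b/A`, and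
`∑_{b<B} (1 - b/A)⁺ ≥ min(A,B)/2`. A fixed value is missed by all `b` earlier draws with
probability `(1 - 1/A)^b ≤ e⁻¹ < 1/2` once `b ≥ A`; then `E|Y^{b-1}| ≥ A/2`, and Jensen's
inequality for the convex `x log x` gives `E(|Y^{b-1}| log₂ |Y^{b-1}|) ≥ (A/2) log₂(A/2)`.
There are `(B - A)⁺` such steps, and the remaining terms are nonnegative.
-/

open MeasureTheory ProbabilityTheory Finset
open scoped ENNReal

lemma min_div_two_le_sum_range_max_one_sub_div (A B : ℕ) (hA : 0 < A) :
    min (A : ℝ) B / 2 ≤ ∑ b ∈ range B, max (1 - (b : ℝ) / A) 0 := by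
  have gauss (n : ℕ) : ∑ i ∈ range n, (i : ℝ) = n * (n - 1) / 2 := by
    induction n with
    | zero => simp
    | succ k ih => rw [sum_range_succ, ih]; push_cast; ring
  set m := min A B with hm
  have hmA : (m : ℝ) ≤ A := by exact_mod_cast min_le_left A B
  have hA' : (0 : ℝ) < A := by exact_mod_cast hA
  have hquad : m * (m - 1) / 2 / A ≤ (m : ℝ) / 2 := by
    rw [div_div, div_le_div_iff₀ (by positivity) two_pos]
    nlinarith [(Nat.cast_nonneg m : (0 : ℝ) ≤ m)]
  calc min (A : ℝ) B / 2 = m / 2 := by rw [hm, Nat.cast_min]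
    _ ≤ m - m * (m - 1) / 2 / A := by linarith
    _ = ∑ b ∈ range m, (1 - (b : ℝ) / A) := by
        rw [sum_sub_distrib, ← sum_div, gauss]; simp
    _ ≤ ∑ b ∈ range m, max (1 - (b : ℝ) / A) 0 := sum_le_sum fun b _ ↦ le_max_left _ _
    _ ≤ ∑ b ∈ range B, max (1 - (b : ℝ) / A) 0 :=
        sum_le_sum_of_subset_of_nonneg (range_subset_range.2 (min_le_right A B))
          fun _ _ _ ↦ le_max_right _ _

lemma Fin.card_filter_le_val (A B : ℕ) : #{b : Fin B | A ≤ (b : ℕ)} = B - A := by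
  have h := card_filter_add_card_filter_not (s := (univ : Finset (Fin B)))
    (fun b : Fin B ↦ (b : ℕ) < A)
  simp only [Fin.card_filter_val_lt, not_lt, card_univ, Fintype.card_fin] at h
  omega

lemma Fin.sum_ite_le_val (A B : ℕ) (c : ℝ) :
    ∑ b : Fin B, (if A ≤ (b : ℕ) then c else 0) = max ((B : ℝ) - A) 0 * c := by
  rw [sum_ite, sum_const_zero, add_zero, Finset.sum_const, nsmul_eq_mul, card_filter_le_val]
  congr 1
  rcases le_total A B with h | h
  · rw [Nat.cast_sub h, max_eq_left (by simpa using h)]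
  · rw [Nat.sub_eq_zero_of_le h, max_eq_right (by simpa using h), Nat.cast_zero]

lemma half_mul_min_add_half_mul_max_le_sum (A B : ℕ) (hA : 0 < A) {L : ℝ} (hL : 1 ≤ L) (c : ℝ) :
    0.5 * (L - 1) * min (A : ℝ) B + 0.5 * max ((B : ℝ) - A) 0 * c
      ≤ ∑ b : Fin B, ((L - 1) * max (1 - (b : ℝ) / A) 0
          + (A : ℝ)⁻¹ * if A ≤ (b : ℕ) then (A : ℝ) / 2 * c else 0) := by
  have hmin := mul_le_mul_of_nonneg_left (min_div_two_le_sum_range_max_one_sub_div A B hA)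
    (by linarith : (0 : ℝ) ≤ L - 1)
  have hmax : (A : ℝ)⁻¹ * (max ((B : ℝ) - A) 0 * ((A : ℝ) / 2 * c))
      = 0.5 * max ((B : ℝ) - A) 0 * c := by
    field_simp
    ring
  rw [sum_add_distrib, ← mul_sum, ← mul_sum, Fin.sum_ite_le_val,
    Fin.sum_univ_eq_sum_range (fun b ↦ max (1 - (b : ℝ) / A) 0)]
  linarith

lemma natCast_card_eq_sum_indicator {Ω X : Type*} [Fintype X] (S : Ω → Finset X) (ω : Ω) :
    (#(S ω) : ℝ) = ∑ x, {ω | x ∈ S ω}.indicator 1 ω := by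
  classical
  simp [Set.indicator_apply]

section RandomFinset

variable {Ω X : Type*} [MeasurableSpace Ω] [Fintype X] {S : Ω → Finset X}

lemma measurable_natCast_card (hS : ∀ x, MeasurableSet {ω | x ∈ S ω}) :
    Measurable fun ω ↦ (#(S ω) : ℝ) := by
  simp_rw [natCast_card_eq_sum_indicator S]
  exact Finset.measurable_sum _ fun x _ ↦ measurable_one.indicator (hS x)

lemma integral_natCast_card {μ : Measure Ω} [IsFiniteMeasure μ]
    (hS : ∀ x, MeasurableSet {ω | x ∈ S ω}) :
    ∫ ω, (#(S ω) : ℝ) ∂μ = ∑ x, μ.real {ω | x ∈ S ω} := by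
  simp_rw [natCast_card_eq_sum_indicator S]
  rw [integral_finsetSum _ fun x _ ↦ (integrable_const 1).indicator (hS x)]
  simp_rw [integral_indicator_one (hS _)]

end RandomFinset

lemma measurableSet_setOf_mem_image {Ω X ι : Type*} [MeasurableSpace Ω] [MeasurableSpace X]
    [MeasurableSingletonClass X] [DecidableEq X] {Y : ι → Ω → X}
    (hmeas : ∀ i, Measurable (Y i)) (s : Finset ι) (x : X) :
    MeasurableSet {ω | x ∈ s.image (Y · ω)} := by
  have : {ω | x ∈ s.image (Y · ω)} = ⋃ i ∈ s, Y i ⁻¹' {x} := by ext; simp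
  exact this ▸ s.measurableSet_biUnion fun i _ ↦ hmeas i (measurableSet_singleton x)

lemma mul_logb_le_integral_mul_logb {Ω : Type*} [MeasurableSpace Ω] {μ : Measure Ω}
    [IsProbabilityMeasure μ] {f : Ω → ℝ} {b c : ℝ} (hb : 1 ≤ b) (hf0 : ∀ᵐ ω ∂μ, 0 ≤ f ω)
    (hf : Integrable f μ) (hflog : Integrable (fun ω ↦ f ω * Real.log (f ω)) μ) (hc : 1 ≤ c)
    (hcf : c ≤ ∫ ω, f ω ∂μ) :
    c * Real.logb b c ≤ ∫ ω, f ω * Real.logb b (f ω) ∂μ := by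
  have jensen : (∫ ω, f ω ∂μ) * Real.log (∫ ω, f ω ∂μ) ≤ ∫ ω, f ω * Real.log (f ω) ∂μ :=
    Real.convexOn_mul_log.map_integral_le Real.continuous_mul_log.continuousOn isClosed_Ici
      hf0 hf hflog
  have mono : c * Real.log c ≤ (∫ ω, f ω ∂μ) * Real.log (∫ ω, f ω ∂μ) :=
    mul_le_mul hcf (Real.log_le_log (by linarith) hcf) (Real.log_nonneg hc) (by linarith)
  simp_rw [Real.logb, ← mul_div_assoc, integral_div]
  exact div_le_div_of_nonneg_right (mono.trans jensen) (Real.log_nonneg hb)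

lemma one_sub_inv_pow_le_half {n k : ℕ} (hn : 0 < n) (hk : n ≤ k) :
    (1 - (n : ℝ)⁻¹) ^ k ≤ 1 / 2 := by
  have h0 : 0 ≤ 1 - (n : ℝ)⁻¹ := sub_nonneg.2 (inv_le_one_of_one_le₀ (by exact_mod_cast hn))
  calc (1 - (n : ℝ)⁻¹) ^ k ≤ (1 - (n : ℝ)⁻¹) ^ n :=
        pow_le_pow_of_le_one h0 (by simp) hk
    _ = (1 - 1 / (n : ℝ)) ^ n := by rw [one_div]
    _ ≤ Real.exp (-1) := Real.one_sub_div_pow_le_exp_neg (by exact_mod_cast hn)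
    _ ≤ 1 / 2 := Real.exp_neg_one_lt_half.le

section Uniform

variable {Ω X ι : Type*} [MeasurableSpace Ω] {μ : Measure Ω}
  [Fintype X] [Nonempty X] [MeasurableSpace X] [MeasurableSingletonClass X]

lemma measure_preimage_singleton_of_map_eq_uniform {Y : Ω → X} (hY : Measurable Y)
    (hunif : μ.map Y = (PMF.uniformOfFintype X).toMeasure) (x : X) :
    μ (Y ⁻¹' {x}) = (Fintype.card X : ℝ≥0∞)⁻¹ := by
  rw [← Measure.map_apply hY (measurableSet_singleton x), hunif,
    PMF.toMeasure_apply_singleton _ _ (measurableSet_singleton x), PMF.uniformOfFintype_apply]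

lemma measure_eq_of_indepFun_of_map_eq_uniform [IsProbabilityMeasure μ] {Y Z : Ω → X}
    (hY : Measurable Y) (hZ : Measurable Z) (hYZ : IndepFun Y Z μ)
    (hunif : μ.map Y = (PMF.uniformOfFintype X).toMeasure) :
    μ {ω | Y ω = Z ω} = (Fintype.card X : ℝ≥0∞)⁻¹ := by
  have hdiag : {ω | Y ω = Z ω} = ⋃ x ∈ (univ : Finset X), Y ⁻¹' {x} ∩ Z ⁻¹' {x} := by
    ext ω; simp [eq_comm]
  have hdisj : Set.PairwiseDisjoint ↑(univ : Finset X) fun x ↦ Y ⁻¹' {x} ∩ Z ⁻¹' {x} :=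
    fun x _ y _ hxy ↦ ((Set.disjoint_singleton.2 hxy).preimage Y).mono inf_le_left inf_le_left
  rw [hdiag, measure_biUnion_finset hdisj
    fun x _ ↦ (hY (measurableSet_singleton x)).inter (hZ (measurableSet_singleton x))]
  simp_rw [hYZ.measure_inter_preimage_eq_mul _ _ (measurableSet_singleton _)
    (measurableSet_singleton _), measure_preimage_singleton_of_map_eq_uniform hY hunif,
    ← mul_sum, sum_measure_preimage_singleton _ fun x _ ↦ hZ (measurableSet_singleton x)]
  simp

variable [IsProbabilityMeasure μ] [DecidableEq X] {Y : ι → Ω → X}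
  (hmeas : ∀ i, Measurable (Y i)) (hindep : iIndepFun Y μ)
  (hunif : ∀ i, μ.map (Y i) = (PMF.uniformOfFintype X).toMeasure)
include hmeas hindep hunif

lemma one_sub_div_le_measureReal_not_mem_image {s : Finset ι} {j : ι} (hj : j ∉ s) :
    1 - #s / (Fintype.card X : ℝ) ≤ μ.real {ω | Y j ω ∉ s.image (Y · ω)} := by
  have hunion : {ω | Y j ω ∈ s.image (Y · ω)} = ⋃ i ∈ s, {ω | Y j ω = Y i ω} := by
    ext; simp [eq_comm]
  have hcoll : ∀ i ∈ s, μ.real {ω | Y j ω = Y i ω} = (Fintype.card X : ℝ)⁻¹ := fun i hi ↦ by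
    rw [measureReal_def, measure_eq_of_indepFun_of_map_eq_uniform (hmeas j) (hmeas i)
      (hindep.indepFun (ne_of_mem_of_not_mem hi hj).symm) (hunif j), ENNReal.toReal_inv,
      ENNReal.toReal_natCast]
  have hunionBound : μ.real {ω | Y j ω ∈ s.image (Y · ω)} ≤ #s / Fintype.card X := by
    rw [hunion, div_eq_mul_inv, ← nsmul_eq_mul, ← sum_const, ← sum_congr rfl hcoll]
    exact measureReal_biUnion_finset_le _ _
  have hm : MeasurableSet {ω | Y j ω ∈ s.image (Y · ω)} :=
    hunion ▸ s.measurableSet_biUnion fun i _ ↦ measurableSet_eq_fun (hmeas j) (hmeas i)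
  change _ ≤ μ.real {ω | Y j ω ∈ s.image (Y · ω)}ᶜ
  rw [probReal_compl_eq_one_sub hm]
  linarith

lemma measure_not_mem_image (s : Finset ι) (x : X) :
    μ {ω | x ∉ s.image (Y · ω)} = (1 - (Fintype.card X : ℝ≥0∞)⁻¹) ^ #s := by
  have : {ω | x ∉ s.image (Y · ω)} = ⋂ i ∈ s, Y i ⁻¹' {x}ᶜ := by ext; simp [eq_comm]
  rw [this, hindep.meas_biInter fun i _ ↦ ⟨{x}ᶜ, (measurableSet_singleton x).compl, rfl⟩,
    ← prod_const]
  refine prod_congr rfl fun i _ ↦ ?_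
  rw [Set.preimage_compl, prob_compl_eq_one_sub (hmeas i (measurableSet_singleton x)),
    measure_preimage_singleton_of_map_eq_uniform (hmeas i) (hunif i)]

lemma integral_card_image (s : Finset ι) :
    ∫ ω, (#(s.image (Y · ω)) : ℝ) ∂μ
      = Fintype.card X * (1 - (1 - (Fintype.card X : ℝ)⁻¹) ^ #s) := by
  have hocc (x : X) :
      μ.real {ω | x ∈ s.image (Y · ω)} = 1 - (1 - (Fintype.card X : ℝ)⁻¹) ^ #s := by
    have hm : MeasurableSet {ω | x ∉ s.image (Y · ω)} :=
      (measurableSet_setOf_mem_image hmeas s x).compl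
    rw [show {ω | x ∈ s.image (Y · ω)} = {ω | x ∉ s.image (Y · ω)}ᶜ by ext; simp,
      probReal_compl_eq_one_sub hm, measureReal_def,
      measure_not_mem_image hmeas hindep hunif, ENNReal.toReal_pow,
      ENNReal.toReal_sub_of_le (ENNReal.inv_le_one.2 (by exact_mod_cast Fintype.card_pos))
        ENNReal.one_ne_top]
    simp
  rw [integral_natCast_card (measurableSet_setOf_mem_image hmeas s),
    sum_congr rfl fun x _ ↦ hocc x, sum_const, card_univ, nsmul_eq_mul]

lemma half_mul_logb_half_le_integral_card_image_mul_logb (hX : 2 ≤ Fintype.card X)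
    {s : Finset ι} (hs : Fintype.card X ≤ #s) :
    (Fintype.card X : ℝ) / 2 * Real.logb 2 ((Fintype.card X : ℝ) / 2)
      ≤ ∫ ω, (#(s.image (Y · ω)) : ℝ) * Real.logb 2 #(s.image (Y · ω)) ∂μ := by
  set N : Ω → ℝ := fun ω ↦ #(s.image (Y · ω))
  have hNmeas : Measurable N := measurable_natCast_card (measurableSet_setOf_mem_image hmeas s)
  have hNle (ω : Ω) : N ω ≤ Fintype.card X := by simp only [N]; exact_mod_cast card_le_univ _
  have hN : Integrable N μ := .of_bound hNmeas.aestronglyMeasurable (Fintype.card X)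
    (ae_of_all _ fun ω ↦ by rw [Real.norm_of_nonneg (by positivity)]; exact hNle ω)
  have hNlog : Integrable (fun ω ↦ N ω * Real.log (N ω)) μ :=
    .of_bound (by fun_prop) (Fintype.card X * Fintype.card X) <| ae_of_all _ fun ω ↦ by
      have hlog : 0 ≤ Real.log (N ω) := Real.log_natCast_nonneg _
      rw [Real.norm_of_nonneg (by positivity)]
      exact mul_le_mul (hNle ω) ((Real.log_le_self (by positivity)).trans (hNle ω)) hlog
        (by positivity)
  have hmean : (Fintype.card X : ℝ) / 2 ≤ ∫ ω, N ω ∂μ := by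
    rw [integral_card_image hmeas hindep hunif]
    have := one_sub_inv_pow_le_half Fintype.card_pos hs
    nlinarith [(Nat.cast_nonneg _ : (0 : ℝ) ≤ Fintype.card X)]
  exact mul_logb_le_integral_mul_logb one_le_two (ae_of_all _ fun _ ↦ by positivity) hN hNlog
    (by rw [le_div_iff₀ two_pos]; exact_mod_cast (by omega : 1 * 2 ≤ Fintype.card X)) hmean

end Uniform

/-- For `Y 0, …, Y (B-1)` i.i.d. uniform on a set of size `A ≥ 2`, with
`Y^{b-1} = {Y 0, …, Y (b-1)}` the set of distinct values seen before step `b`, and any real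
`L ≥ 1`,
`∑_b [(L-1) P(Y b ∉ Y^{b-1}) + A⁻¹ E(|Y^{b-1}| log₂ |Y^{b-1}|)]
  ≥ 0.5 (L-1) min(A,B) + 0.5 (B-A)⁺ log₂(A/2)`. -/
theorem stmt16 {Ω X : Type*} [MeasureSpace Ω] [IsProbabilityMeasure (volume : Measure Ω)]
    [Fintype X] [Nonempty X] [DecidableEq X] [MeasurableSpace X] [MeasurableSingletonClass X]
    (A B : ℕ) (hA : Fintype.card X = A) (hA2 : 2 ≤ A)
    (Y : Fin B → Ω → X)
    (hmeas : ∀ i, Measurable (Y i))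
    (hindep : iIndepFun Y volume)
    (hunif : ∀ i, Measure.map (Y i) volume = (PMF.uniformOfFintype X).toMeasure)
    (L : ℝ) (hL : 1 ≤ L) :
    ∑ b : Fin B,
        ((L - 1) * (volume {ω | Y b ω ∉
            (Finset.univ.filter (fun i : Fin B => i < b)).image (fun i => Y i ω)}).toReal
          + (A : ℝ)⁻¹ * ∫ ω,
              (((Finset.univ.filter (fun i : Fin B => i < b)).image (fun i => Y i ω)).card : ℝ)
                * Real.logb 2
                  (((Finset.univ.filter (fun i : Fin B => i < b)).image (fun i => Y i ω)).card))
      ≥ 0.5 * (L - 1) * min (A : ℝ) (B : ℝ)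
        + 0.5 * max ((B : ℝ) - A) 0 * Real.logb 2 ((A : ℝ) / 2) := by
  subst hA
  have hcard (b : Fin B) : #{i : Fin B | i < b} = b := by rw [filter_gt_eq_Iio, Fin.card_Iio]
  refine ge_iff_le.2 ((half_mul_min_add_half_mul_max_le_sum _ B Fintype.card_pos hL _).trans
    (sum_le_sum fun b _ ↦ add_le_add ?_ ?_))
  · refine mul_le_mul_of_nonneg_left (max_le ?_ measureReal_nonneg) (by linarith)
    exact hcard b ▸ one_sub_div_le_measureReal_not_mem_image hmeas hindep hunif (by simp)
  · refine mul_le_mul_of_nonneg_left ?_ (by positivity)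
    split_ifs with h
    · exact half_mul_logb_half_le_integral_card_image_mul_logb hmeas hindep hunif hA2
        (hcard b ▸ h)
    · exact integral_nonneg fun ω ↦ mul_nonneg (Nat.cast_nonneg _)
        (div_nonneg (Real.log_natCast_nonneg _) (Real.log_nonneg one_le_two))
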